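/- Let Σ be an n×n real symmetric matrix with orthogonal eigenvalue decomposition Σ = V Λ Vᵀ, where V is orthogonal and Λ is diagonal with pairwise distinct diagonal entries. Let A be an n×n real orthogonal matrix with A² = I and A Σ Aᵀ = Σ. Then A = V D Vᵀ, where D is a diagonal matrix each of whose diagonal entries is 1 or −1. -/

import Mathlib

/-!
Conjugating by `V` turns `A` into `B = Vᵀ A V`, again orthogonal. Since `A` is orthogonal,
`A Σ Aᵀ = Σ` says that `A` commutes with `Σ`, so `B` commutes with `Λ`; comparing the `(i, j)`
entries of `B Λ = Λ B` gives `B i j (Λ j - Λ i) = 0`, and distinctness of the eigenvalues makes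
`B` diagonal. A diagonal orthogonal matrix has entries `±1`, and `A = V B Vᵀ`.
-/

open Matrix

namespace Matrix

variable {n R : Type*} [Fintype n] [DecidableEq n]

theorem commute_of_mul_mul_transpose_eq [CommSemiring R] {A S : Matrix n n R}
    (hA : Aᵀ * A = 1) (h : A * S * Aᵀ = S) : Commute A S :=
  calc A * S = A * S * (Aᵀ * A) := by rw [hA, Matrix.mul_one]
    _ = (A * S * Aᵀ) * A := by simp only [Matrix.mul_assoc]
    _ = S * A := by rw [h]

theorem commute_transpose_mul_mul_of_commute [CommSemiring R] {A V M : Matrix n n R}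
    (hV : Vᵀ * V = 1) (h : Commute A (V * M * Vᵀ)) : Commute (Vᵀ * A * V) M :=
  calc Vᵀ * A * V * M = Vᵀ * (A * (V * M * Vᵀ)) * V := by
        simp only [Matrix.mul_assoc, hV, Matrix.mul_one]
    _ = Vᵀ * (V * M * Vᵀ * A) * V := by rw [h.eq]
    _ = M * (Vᵀ * A * V) := by simp only [← Matrix.mul_assoc, hV, Matrix.one_mul]

theorem transpose_mul_self_transpose_mul_mul [CommRing R] {A V : Matrix n n R}
    (hA : Aᵀ * A = 1) (hV : Vᵀ * V = 1) : (Vᵀ * A * V)ᵀ * (Vᵀ * A * V) = 1 :=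
  calc (Vᵀ * A * V)ᵀ * (Vᵀ * A * V) = Vᵀ * (Aᵀ * (V * Vᵀ) * A) * V := by
        simp only [transpose_mul, transpose_transpose, Matrix.mul_assoc]
    _ = 1 := by rw [mul_eq_one_comm.mp hV, Matrix.mul_one, hA, Matrix.mul_one, hV]

theorem isDiag_of_commute_diagonal [CommRing R] [NoZeroDivisors R]
    {d : n → R} (hd : Function.Injective d) {B : Matrix n n R} (h : Commute B (diagonal d)) :
    B.IsDiag := by
  intro i j hij
  have hij_entry : B i j * d j = d i * B i j := by
    simpa only [mul_diagonal, diagonal_mul] using congr_fun₂ h.eq i j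
  have hsub : d j - d i ≠ 0 := sub_ne_zero.mpr (hd.ne hij).symm
  have hprod : B i j * (d j - d i) = 0 := by rw [mul_sub, hij_entry, mul_comm]; exact sub_self _
  exact (mul_eq_zero.mp hprod).resolve_right hsub

theorem IsDiag.apply_self_eq_one_or_eq_neg_one [CommRing R] [NoZeroDivisors R]
    {B : Matrix n n R} (hB : B.IsDiag) (h : Bᵀ * B = 1) (i : n) : B i i = 1 ∨ B i i = -1 := by
  rw [← hB.diagonal_diag, diagonal_transpose, diagonal_mul_diagonal] at h
  exact mul_self_eq_one_iff.mp (by simpa using congr_fun₂ h i i)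

end Matrix

theorem orthogonal_involution_symmetry_decomposition_general (n : ℕ)
    (S : Matrix (Fin n) (Fin n) ℝ)
    (V : Matrix (Fin n) (Fin n) ℝ) (hV : Vᵀ * V = 1)
    (Λ : Fin n → ℝ) (hΛ : Function.Injective Λ)
    (hdecomp : S = V * Matrix.diagonal Λ * Vᵀ)
    (A : Matrix (Fin n) (Fin n) ℝ)
    (horth : Aᵀ * A = 1)
    (hsym : A * S * Aᵀ = S) :
    ∃ D : Fin n → ℝ, (∀ i, D i = 1 ∨ D i = -1) ∧ A = V * Matrix.diagonal D * Vᵀ := by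
  have hV' : V * Vᵀ = 1 := mul_eq_one_comm.mp hV
  have hcomm : Commute (Vᵀ * A * V) (diagonal Λ) :=
    commute_transpose_mul_mul_of_commute hV (hdecomp ▸ commute_of_mul_mul_transpose_eq horth hsym)
  have hdiag := isDiag_of_commute_diagonal hΛ hcomm
  refine ⟨(Vᵀ * A * V).diag,
    hdiag.apply_self_eq_one_or_eq_neg_one (transpose_mul_self_transpose_mul_mul horth hV), ?_⟩
  rw [hdiag.diagonal_diag]
  calc A = (V * Vᵀ) * A * (V * Vᵀ) := by rw [hV', Matrix.one_mul, Matrix.mul_one]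
    _ = V * (Vᵀ * A * V) * Vᵀ := by simp only [Matrix.mul_assoc]

/-- If `Σ = V Λ Vᵀ` is an orthogonal eigenvalue decomposition with pairwise distinct
eigenvalues, and `A` is an orthogonal involution with `A Σ Aᵀ = Σ`, then `A = V D Vᵀ`
for a diagonal matrix `D` with diagonal entries `±1`. -/
theorem orthogonal_involution_symmetry_decomposition (n : ℕ)
    (S : Matrix (Fin n) (Fin n) ℝ)
    (V : Matrix (Fin n) (Fin n) ℝ) (hV : Vᵀ * V = 1)
    (Λ : Fin n → ℝ) (hΛ : Function.Injective Λ)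
    (hdecomp : S = V * Matrix.diagonal Λ * Vᵀ)
    (A : Matrix (Fin n) (Fin n) ℝ)
    (horth : Aᵀ * A = 1) (hinv : A * A = 1)
    (hsym : A * S * Aᵀ = S) :
    ∃ D : Fin n → ℝ, (∀ i, D i = 1 ∨ D i = -1) ∧ A = V * Matrix.diagonal D * Vᵀ :=
  orthogonal_involution_symmetry_decomposition_general n S V hV Λ hΛ hdecomp A horth hsym
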